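/- Fix ℏ > 0 and let Φ : ℝ → ℝ be a polynomial. Define on C^∞(ℝ², ℂ) the operators q̂'_T = x'· + (iℏ/2)∂_{p'} and p̂'_T = p'· − (iℏ/2)∂_{x'} − ∑_{n≥2} (1/n!) (iℏ/2)^n Φ^{(n+1)}(x') ∂_{p'}^{n} (a finite sum since Φ is a polynomial). Then [q̂'_T, p̂'_T] = iℏ · Id as operators on C^∞(ℝ², ℂ). Hence the canonical transformation T(x',p') = (−a p' − a Φ'(x'), a^{-1} x') (a ≠ 0), under which x' ⋆'_T = q̂'_T and p' ⋆'_T = p̂'_T, is a quantum canonical transformation. -/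

import Mathlib

open Complex Polynomial

/-- The partial derivative `∂_{x'}` on functions ℝ² → ℂ (coordinates `(x',p')`). -/
noncomputable def pdx (f : ℝ × ℝ → ℂ) : ℝ × ℝ → ℂ := fun z => fderiv ℝ f z (1, 0)

/-- The partial derivative `∂_{p'}` on functions ℝ² → ℂ (coordinates `(x',p')`). -/
noncomputable def pdp (f : ℝ × ℝ → ℂ) : ℝ × ℝ → ℂ := fun z => fderiv ℝ f z (0, 1)

/-- `q̂ = x'· + (iℏ/2)∂_{p'}`. -/
noncomputable def qop (ℏ : ℝ) (f : ℝ × ℝ → ℂ) : ℝ × ℝ → ℂ := fun z =>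
  (z.1 : ℂ) * f z + (Complex.I * (ℏ : ℂ) / 2) * pdp f z

/-- `p̂ = p'· − (iℏ/2)∂_{x'}`. -/
noncomputable def pop (ℏ : ℝ) (f : ℝ × ℝ → ℂ) : ℝ × ℝ → ℂ := fun z =>
  (z.2 : ℂ) * f z - (Complex.I * (ℏ : ℂ) / 2) * pdx f z

/-- `Â = −∑_{n≥1} (1/(2n+1)!)(−1)^n (ℏ/2)^{2n} Φ^{(2n+1)}(x') ∂_{p'}^{2n+1}`.
Since `Φ` is a polynomial, `Φ^{(2n+1)} = 0` once `2n+1 > deg Φ`, so the sum below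
over `1 ≤ n ≤ natDegree Φ` contains all the (finitely many) nonzero terms. -/
noncomputable def Aop (ℏ : ℝ) (Φ : Polynomial ℝ) (f : ℝ × ℝ → ℂ) : ℝ × ℝ → ℂ := fun z =>
  -∑ n ∈ Finset.Icc 1 Φ.natDegree,
    (((2 * n + 1).factorial : ℂ))⁻¹ * (-1 : ℂ) ^ n * (((ℏ / 2 : ℝ)) : ℂ) ^ (2 * n) *
      (((Polynomial.derivative^[2 * n + 1] Φ).eval z.1 : ℝ) : ℂ) * (pdp^[2 * n + 1] f) z


lemma contDiff_pdp {f : ℝ × ℝ → ℂ} (hf : ContDiff ℝ (⊤ : ℕ∞) f) : ContDiff ℝ (⊤ : ℕ∞) (pdp f) :=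
  (hf.fderiv_right (by simp)).clm_apply contDiff_const

lemma contDiff_pdx {f : ℝ × ℝ → ℂ} (hf : ContDiff ℝ (⊤ : ℕ∞) f) : ContDiff ℝ (⊤ : ℕ∞) (pdx f) :=
  (hf.fderiv_right (by simp)).clm_apply contDiff_const

lemma contDiff_pdp_iter (n : ℕ) {f : ℝ × ℝ → ℂ} (hf : ContDiff ℝ (⊤ : ℕ∞) f) :
    ContDiff ℝ (⊤ : ℕ∞) (pdp^[n] f) := by
  induction n with
  | zero => exact hf
  | succ n ih => rw [Function.iterate_succ_apply']; exact contDiff_pdp ih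

lemma fd_add {f g : ℝ × ℝ → ℂ} {z : ℝ × ℝ} (hf : DifferentiableAt ℝ f z)
    (hg : DifferentiableAt ℝ g z) (v : ℝ × ℝ) :
    fderiv ℝ (fun w => f w + g w) z v = fderiv ℝ f z v + fderiv ℝ g z v := by
  rw [fderiv_fun_add hf hg]; rfl

lemma fd_sub {f g : ℝ × ℝ → ℂ} {z : ℝ × ℝ} (hf : DifferentiableAt ℝ f z)
    (hg : DifferentiableAt ℝ g z) (v : ℝ × ℝ) :
    fderiv ℝ (fun w => f w - g w) z v = fderiv ℝ f z v - fderiv ℝ g z v := by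
  rw [fderiv_fun_sub hf hg]; rfl

lemma fd_const_mul {f : ℝ × ℝ → ℂ} {z : ℝ × ℝ} (hf : DifferentiableAt ℝ f z) (c : ℂ)
    (v : ℝ × ℝ) :
    fderiv ℝ (fun w => c * f w) z v = c * fderiv ℝ f z v := by
  rw [fderiv_const_mul hf c]; simp

lemma fd_sum {ι : Type*} {s : Finset ι} {A : ι → ℝ × ℝ → ℂ} {z : ℝ × ℝ}
    (h : ∀ i ∈ s, DifferentiableAt ℝ (A i) z) (v : ℝ × ℝ) :
    fderiv ℝ (fun w => ∑ i ∈ s, A i w) z v = ∑ i ∈ s, fderiv ℝ (A i) z v := by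
  rw [fderiv_fun_sum h]; simp

lemma fd_mul_fst (h : ℝ → ℂ) (hh : Differentiable ℝ h) {f : ℝ × ℝ → ℂ} {z : ℝ × ℝ}
    (hf : DifferentiableAt ℝ f z) (v : ℝ × ℝ) :
    fderiv ℝ (fun w => h w.1 * f w) z v
      = (v.1 : ℂ) * deriv h z.1 * f z + h z.1 * fderiv ℝ f z v := by
  have hu : DifferentiableAt ℝ (fun w : ℝ × ℝ => h w.1) z :=
    (hh z.1).comp z differentiableAt_fst
  rw [fderiv_fun_mul hu hf]
  have hcomp : fderiv ℝ (fun w : ℝ × ℝ => h w.1) z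
      = (fderiv ℝ h z.1).comp (ContinuousLinearMap.fst ℝ ℝ ℝ) := by
    rw [show (fun w : ℝ × ℝ => h w.1) = h ∘ Prod.fst from rfl,
      fderiv_comp z (hh z.1) differentiableAt_fst, fderiv_fst]
  have hv : fderiv ℝ h z.1 v.1 = (v.1 : ℂ) * deriv h z.1 := by
    have : v.1 = v.1 • (1 : ℝ) := by simp
    rw [this, map_smul, fderiv_apply_one_eq_deriv]
    simp [smul_eq_mul]
  simp only [ContinuousLinearMap.add_apply, ContinuousLinearMap.smul_apply, hcomp,
    ContinuousLinearMap.comp_apply, ContinuousLinearMap.coe_fst', smul_eq_mul, hv]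
  ring

lemma fd_mul_snd (h : ℝ → ℂ) (hh : Differentiable ℝ h) {f : ℝ × ℝ → ℂ} {z : ℝ × ℝ}
    (hf : DifferentiableAt ℝ f z) (v : ℝ × ℝ) :
    fderiv ℝ (fun w => h w.2 * f w) z v
      = (v.2 : ℂ) * deriv h z.2 * f z + h z.2 * fderiv ℝ f z v := by
  have hu : DifferentiableAt ℝ (fun w : ℝ × ℝ => h w.2) z :=
    (hh z.2).comp z differentiableAt_snd
  rw [fderiv_fun_mul hu hf]
  have hcomp : fderiv ℝ (fun w : ℝ × ℝ => h w.2) z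
      = (fderiv ℝ h z.2).comp (ContinuousLinearMap.snd ℝ ℝ ℝ) := by
    rw [show (fun w : ℝ × ℝ => h w.2) = h ∘ Prod.snd from rfl,
      fderiv_comp z (hh z.2) differentiableAt_snd, fderiv_snd]
  have hv : fderiv ℝ h z.2 v.2 = (v.2 : ℂ) * deriv h z.2 := by
    have : v.2 = v.2 • (1 : ℝ) := by simp
    rw [this, map_smul, fderiv_apply_one_eq_deriv]
    simp [smul_eq_mul]
  simp only [ContinuousLinearMap.add_apply, ContinuousLinearMap.smul_apply, hcomp,
    ContinuousLinearMap.comp_apply, ContinuousLinearMap.coe_snd', smul_eq_mul, hv]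
  ring

lemma deriv_ofReal' (x : ℝ) : deriv (fun t : ℝ => (t : ℂ)) x = 1 := by
  have h : HasDerivAt (fun t : ℝ => (t : ℂ)) 1 x := by
    simpa using (hasDerivAt_id x).ofReal_comp
  exact h.deriv

lemma diff_ofReal : Differentiable ℝ (fun t : ℝ => (t : ℂ)) :=
  Complex.ofRealCLM.differentiable

lemma contDiff_xmul {f : ℝ × ℝ → ℂ} (hf : ContDiff ℝ (⊤ : ℕ∞) f) :
    ContDiff ℝ (⊤ : ℕ∞) (fun w : ℝ × ℝ => (w.1 : ℂ) * f w) :=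
  ((Complex.ofRealCLM.contDiff.comp contDiff_fst).mul hf)

lemma contDiff_ymul {f : ℝ × ℝ → ℂ} (hf : ContDiff ℝ (⊤ : ℕ∞) f) :
    ContDiff ℝ (⊤ : ℕ∞) (fun w : ℝ × ℝ => (w.2 : ℂ) * f w) :=
  ((Complex.ofRealCLM.contDiff.comp contDiff_snd).mul hf)

lemma pdp_h_mul (h : ℝ → ℂ) (hh : Differentiable ℝ h) {f : ℝ × ℝ → ℂ} {z : ℝ × ℝ}
    (hf : DifferentiableAt ℝ f z) :
    pdp (fun w => h w.1 * f w) z = h z.1 * pdp f z := by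
  show fderiv ℝ (fun w => h w.1 * f w) z (0, 1) = h z.1 * fderiv ℝ f z (0, 1)
  rw [fd_mul_fst h hh hf]
  norm_num

lemma pdx_h_mul (h : ℝ → ℂ) (hh : Differentiable ℝ h) {f : ℝ × ℝ → ℂ} {z : ℝ × ℝ}
    (hf : DifferentiableAt ℝ f z) :
    pdx (fun w => h w.1 * f w) z = deriv h z.1 * f z + h z.1 * pdx f z := by
  show fderiv ℝ (fun w => h w.1 * f w) z (1, 0) = _
  rw [fd_mul_fst h hh hf]
  norm_num [pdx]

lemma pdx_x_mul {f : ℝ × ℝ → ℂ} {z : ℝ × ℝ} (hf : DifferentiableAt ℝ f z) :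
    pdx (fun w => (w.1 : ℂ) * f w) z = f z + (z.1 : ℂ) * pdx f z := by
  rw [pdx_h_mul _ diff_ofReal hf, deriv_ofReal', one_mul]

lemma pdp_y_mul {f : ℝ × ℝ → ℂ} {z : ℝ × ℝ} (hf : DifferentiableAt ℝ f z) :
    pdp (fun w => (w.2 : ℂ) * f w) z = f z + (z.2 : ℂ) * pdp f z := by
  show fderiv ℝ (fun w => (w.2 : ℂ) * f w) z (0, 1) = _
  rw [fd_mul_snd _ diff_ofReal hf]
  norm_num [deriv_ofReal', pdp]

lemma pdp_iter_h_mul (h : ℝ → ℂ) (hh : Differentiable ℝ h) (n : ℕ) :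
    ∀ {f : ℝ × ℝ → ℂ}, ContDiff ℝ (⊤ : ℕ∞) f → ∀ z,
      pdp^[n] (fun w => h w.1 * f w) z = h z.1 * pdp^[n] f z := by
  induction n with
  | zero => intro f hf z; rfl
  | succ n ih =>
    intro f hf z
    rw [Function.iterate_succ_apply, Function.iterate_succ_apply]
    have : pdp (fun w => h w.1 * f w) = fun w => h w.1 * pdp f w :=
      funext fun w => pdp_h_mul h hh (hf.differentiable (by simp) w)
    rw [this, ih (contDiff_pdp hf) z]

lemma pdp_iter_add (n : ℕ) :
    ∀ {f g : ℝ × ℝ → ℂ}, ContDiff ℝ (⊤ : ℕ∞) f → ContDiff ℝ (⊤ : ℕ∞) g → ∀ z,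
      pdp^[n] (fun w => f w + g w) z = pdp^[n] f z + pdp^[n] g z := by
  induction n with
  | zero => intro f g hf hg z; rfl
  | succ n ih =>
    intro f g hf hg z
    rw [Function.iterate_succ_apply, Function.iterate_succ_apply,
      Function.iterate_succ_apply]
    have : pdp (fun w => f w + g w) = fun w => pdp f w + pdp g w :=
      funext fun w => fd_add (hf.differentiable (by simp) w) (hg.differentiable (by simp) w) _
    rw [this, ih (contDiff_pdp hf) (contDiff_pdp hg) z]

lemma pdp_iter_const_mul (c : ℂ) (n : ℕ) :
    ∀ {f : ℝ × ℝ → ℂ}, ContDiff ℝ (⊤ : ℕ∞) f → ∀ z,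
      pdp^[n] (fun w => c * f w) z = c * pdp^[n] f z := by
  induction n with
  | zero => intro f hf z; rfl
  | succ n ih =>
    intro f hf z
    rw [Function.iterate_succ_apply, Function.iterate_succ_apply]
    have : pdp (fun w => c * f w) = fun w => c * pdp f w :=
      funext fun w => fd_const_mul (hf.differentiable (by simp) w) c _
    rw [this, ih (contDiff_pdp hf) z]

lemma pd_apply (f : ℝ × ℝ → ℂ) (hf : ContDiff ℝ (⊤ : ℕ∞) f) (v : ℝ × ℝ) (z : ℝ × ℝ) :
    fderiv ℝ (fun w => fderiv ℝ f w v) z = (ContinuousLinearMap.apply ℝ ℂ v).comp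
      (fderiv ℝ (fderiv ℝ f) z) := by
  have hdf : DifferentiableAt ℝ (fderiv ℝ f) z :=
    ((hf.fderiv_right (m := 1) (WithTop.coe_le_coe.mpr le_top)).differentiable one_ne_zero) z
  exact ((ContinuousLinearMap.apply ℝ ℂ v).hasFDerivAt.comp z hdf.hasFDerivAt).fderiv

lemma clairaut {f : ℝ × ℝ → ℂ} (hf : ContDiff ℝ (⊤ : ℕ∞) f) (z : ℝ × ℝ) :
    pdx (pdp f) z = pdp (pdx f) z := by
  have h := (hf.contDiffAt (x := z)).isSymmSndFDerivAt (by rw [minSmoothness_of_isRCLikeNormedField]; exact WithTop.coe_le_coe.mpr le_top)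
  show fderiv ℝ (fun w => fderiv ℝ f w (0, 1)) z (1, 0)
    = fderiv ℝ (fun w => fderiv ℝ f w (1, 0)) z (0, 1)
  rw [pd_apply f hf (0, 1) z, pd_apply f hf (1, 0) z]
  exact h _ _

noncomputable def hcoef (ℏ : ℝ) (Φ : Polynomial ℝ) (n : ℕ) (x : ℝ) : ℂ :=
  ((n.factorial : ℂ))⁻¹ * (Complex.I * (ℏ : ℂ) / 2) ^ n *
    (((Polynomial.derivative^[n + 1] Φ).eval x : ℝ) : ℂ)

lemma diff_hcoef (ℏ : ℝ) (Φ : Polynomial ℝ) (n : ℕ) : Differentiable ℝ (hcoef ℏ Φ n) :=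
  (differentiable_const _).mul
    (diff_ofReal.comp (Polynomial.derivative^[n + 1] Φ).differentiable)


/-- For ℏ > 0, `a ≠ 0` and a polynomial Φ, the operators
`q̂'_T = x'· + (iℏ/2)∂_{p'}` and
`p̂'_T = p'· − (iℏ/2)∂_{x'} − ∑_{n≥2} (1/n!)(iℏ/2)^n Φ^{(n+1)}(x') ∂_{p'}^n`
(the operators of left ⋆'_T-multiplication by `x'` and `p'` for the Moyal product
transformed by `T(x',p') = (−ap' − aΦ'(x'), a⁻¹x')`, generated by
`F(x,x') = a⁻¹xx' + Φ(x')`) satisfy `[q̂'_T, p̂'_T] = iℏ·Id` on C^∞(ℝ²,ℂ);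
hence `T` is a quantum canonical transformation. -/
theorem transformed_operators_ccr (ℏ : ℝ) (hℏ : 0 < ℏ) (a : ℝ) (ha : a ≠ 0)
    (Φ : Polynomial ℝ)
    (qT pT : (ℝ × ℝ → ℂ) → (ℝ × ℝ → ℂ))
    (hqT : ∀ f z, qT f z = (z.1 : ℂ) * f z + (Complex.I * (ℏ : ℂ) / 2) * pdp f z)
    (hpT : ∀ f z, pT f z = (z.2 : ℂ) * f z - (Complex.I * (ℏ : ℂ) / 2) * pdx f z
      - ∑ n ∈ Finset.Icc 2 Φ.natDegree,
          ((n.factorial : ℂ))⁻¹ * (Complex.I * (ℏ : ℂ) / 2) ^ n *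
            (((Polynomial.derivative^[n + 1] Φ).eval z.1 : ℝ) : ℂ) * (pdp^[n] f) z) :
    ∀ f : ℝ × ℝ → ℂ, ContDiff ℝ (⊤ : ℕ∞) f →
      ∀ z, qT (pT f) z - pT (qT f) z = Complex.I * (ℏ : ℂ) * f z := by
  intro f hf z
  set c : ℂ := Complex.I * (ℏ : ℂ) / 2 with hc
  set N := Φ.natDegree with hN
  -- functional forms
  have hp' : pT f = fun w => (w.2 : ℂ) * f w - c * pdx f w
      - ∑ n ∈ Finset.Icc 2 N, hcoef ℏ Φ n w.1 * pdp^[n] f w :=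
    funext fun w => by rw [hpT f w]; rfl
  have hq' : qT f = fun w => (w.1 : ℂ) * f w + c * pdp f w :=
    funext fun w => by rw [hqT f w]
  -- differentiability facts
  have hdf : Differentiable ℝ f := hf.differentiable (by simp)
  have d1 : DifferentiableAt ℝ (fun w : ℝ × ℝ => (w.2 : ℂ) * f w) z :=
    (contDiff_ymul hf).differentiable (by simp) z
  have d2 : DifferentiableAt ℝ (fun w : ℝ × ℝ => c * pdx f w) z :=
    ((contDiff_const.mul (contDiff_pdx hf)).differentiable (by simp)) z
  have dterm : ∀ n ∈ Finset.Icc 2 N,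
      DifferentiableAt ℝ (fun w : ℝ × ℝ => hcoef ℏ Φ n w.1 * pdp^[n] f w) z :=
    fun n _ => (((diff_hcoef ℏ Φ n).comp differentiable_fst).mul
      ((contDiff_pdp_iter n hf).differentiable (by simp))) z
  have dS : DifferentiableAt ℝ
      (fun w : ℝ × ℝ => ∑ n ∈ Finset.Icc 2 N, hcoef ℏ Φ n w.1 * pdp^[n] f w) z :=
    DifferentiableAt.fun_sum dterm
  -- A : pdp (pT f) z
  have hA : pdp (pT f) z = f z + (z.2 : ℂ) * pdp f z - c * pdp (pdx f) z
      - ∑ n ∈ Finset.Icc 2 N, hcoef ℏ Φ n z.1 * pdp^[n + 1] f z := by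
    rw [hp']
    rw [show pdp (fun w => (w.2 : ℂ) * f w - c * pdx f w
        - ∑ n ∈ Finset.Icc 2 N, hcoef ℏ Φ n w.1 * pdp^[n] f w) z
      = pdp (fun w => (w.2 : ℂ) * f w - c * pdx f w) z
        - pdp (fun w => ∑ n ∈ Finset.Icc 2 N, hcoef ℏ Φ n w.1 * pdp^[n] f w) z
      from fd_sub (d1.sub d2) dS (0, 1)]
    rw [show pdp (fun w => (w.2 : ℂ) * f w - c * pdx f w) z
      = pdp (fun w => (w.2 : ℂ) * f w) z - pdp (fun w => c * pdx f w) z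
      from fd_sub d1 d2 (0, 1)]
    rw [pdp_y_mul (hdf z)]
    rw [show pdp (fun w => c * pdx f w) z = c * pdp (pdx f) z
      from fd_const_mul ((contDiff_pdx hf).differentiable (by simp) z) c (0, 1)]
    rw [show pdp (fun w => ∑ n ∈ Finset.Icc 2 N, hcoef ℏ Φ n w.1 * pdp^[n] f w) z
      = ∑ n ∈ Finset.Icc 2 N, pdp (fun w => hcoef ℏ Φ n w.1 * pdp^[n] f w) z
      from fd_sum dterm (0, 1)]
    congr 1
    refine Finset.sum_congr rfl fun n _ => ?_
    rw [pdp_h_mul _ (diff_hcoef ℏ Φ n) ((contDiff_pdp_iter n hf).differentiable (by simp) z),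
      ← Function.iterate_succ_apply' pdp n f]
  -- B : pdx (qT f) z
  have hB : pdx (qT f) z = f z + (z.1 : ℂ) * pdx f z + c * pdx (pdp f) z := by
    rw [hq']
    rw [show pdx (fun w => (w.1 : ℂ) * f w + c * pdp f w) z
      = pdx (fun w => (w.1 : ℂ) * f w) z + pdx (fun w => c * pdp f w) z
      from fd_add ((contDiff_xmul hf).differentiable (by simp) z)
        ((contDiff_const.mul (contDiff_pdp hf)).differentiable (by simp) z) (1, 0)]
    rw [pdx_x_mul (hdf z)]
    rw [show pdx (fun w => c * pdp f w) z = c * pdx (pdp f) z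
      from fd_const_mul ((contDiff_pdp hf).differentiable (by simp) z) c (1, 0)]
  -- C : the sum applied to qT f
  have hC : ∑ n ∈ Finset.Icc 2 N, hcoef ℏ Φ n z.1 * pdp^[n] (qT f) z
      = (z.1 : ℂ) * (∑ n ∈ Finset.Icc 2 N, hcoef ℏ Φ n z.1 * pdp^[n] f z)
        + c * (∑ n ∈ Finset.Icc 2 N, hcoef ℏ Φ n z.1 * pdp^[n + 1] f z) := by
    rw [Finset.mul_sum, Finset.mul_sum, ← Finset.sum_add_distrib]
    refine Finset.sum_congr rfl fun n _ => ?_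
    rw [hq']
    rw [pdp_iter_add n (contDiff_xmul hf) (contDiff_const.mul (contDiff_pdp hf)) z,
      pdp_iter_h_mul _ diff_ofReal n hf z, pdp_iter_const_mul c n (contDiff_pdp hf) z,
      ← Function.iterate_succ_apply pdp n f]
    ring
  -- assemble
  have hsum : ∀ zz : ℝ × ℝ, (∑ n ∈ Finset.Icc 2 N,
      ((n.factorial : ℂ))⁻¹ * (Complex.I * (ℏ : ℂ) / 2) ^ n *
        (((Polynomial.derivative^[n + 1] Φ).eval zz.1 : ℝ) : ℂ) * (pdp^[n] (qT f)) zz)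
      = ∑ n ∈ Finset.Icc 2 N, hcoef ℏ Φ n zz.1 * pdp^[n] (qT f) zz :=
    fun zz => rfl
  rw [hqT (pT f) z, hpT (qT f) z, hpT f z, hqT f z, hsum z, hA, hB, hC,
    clairaut hf z]
  show (z.1 : ℂ) * ((z.2 : ℂ) * f z - c * pdx f z
      - ∑ n ∈ Finset.Icc 2 N, hcoef ℏ Φ n z.1 * pdp^[n] f z) + _ - _ = _
  ring
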